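/- arXiv:0808.2173 — 3 statements merged into one kernel-verified Lean document; each statement's English description precedes it below -/
import Mathlib

section
/- Let n = 3 or n ≥ 5, and let Γ be a connected bichromatic graph which is locally like W(B_n). Then Γ is isomorphic, as a bichromatic graph, to W(B_n). -/
/-!
Charts of the links identify the closed neighbourhood of every vertex with that of `y₁₁` or `y₁₂`.
Short neighbours of a vertex are pairwise adjacent and adjacent vertices have a common short
neighbour, so by connectedness all short vertices form a clique, which the chart at one of them
numbers by `Fin n`. A long vertex misses exactly two short vertices. Charts at short vertices
adjacent to two given long ones show that these are adjacent exactly when their missed pairs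
coincide or are disjoint, and that every pair of short vertices is missed by exactly two long
vertices; giving these two the two orderings of the pair yields the isomorphism. The hypothesis
`n ≠ 4` provides the common short neighbours: in `W(B₄)` the adjacent vertices `y₁₂` and `y₃₄`
have none.
-/

def WB (n : ℕ) : SimpleGraph (Fin n × Fin n) where
  Adj p q :=
    p ≠ q ∧ (({p.1, p.2} : Set (Fin n)) ∩ {q.1, q.2} = ∅ ∨ (q.1 = p.2 ∧ q.2 = p.1))
  symm := by
    constructor
    rintro ⟨a, b⟩ ⟨c, d⟩ ⟨hne, h⟩
    refine ⟨hne.symm, ?_⟩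
    rcases h with h | ⟨h1, h2⟩
    · left; rw [Set.inter_comm] at h; exact h
    · right; exact ⟨h2.symm, h1.symm⟩
  loopless := by constructor; rintro ⟨a, b⟩ ⟨hne, _⟩; exact hne rfl

def WBcolor (n : ℕ) (p : Fin n × Fin n) : Bool := decide (p.1 = p.2)

def BIso {V : Type*} {W : Type*} (G : SimpleGraph V) (cG : V → Bool)
    (H : SimpleGraph W) (cH : W → Bool) : Prop :=
  ∃ e : G ≃g H, ∀ v : V, cH (e v) = cG v

/-- The vertex `y_{1,1}` of `WB n`, a short vertex. -/
def shortWBvertex (n : ℕ) (hn : 2 ≤ n) : Fin n × Fin n := (⟨0, by omega⟩, ⟨0, by omega⟩)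

/-- The vertex `y_{1,2}` of `WB n`, a long vertex. -/
def longWBvertex (n : ℕ) (hn : 2 ≤ n) : Fin n × Fin n := (⟨0, by omega⟩, ⟨1, by omega⟩)

/-- A bichromatic graph is locally like `W(Bₙ)` if the local graph at every short vertex is
isomorphic (as a bichromatic graph) to the local graph of `W(Bₙ)` at `y_{1,1}` and the local
graph at every long vertex is isomorphic to the local graph of `W(Bₙ)` at `y_{1,2}`. -/
def LocallyLikeWBn {V : Type*} (G : SimpleGraph V) (c : V → Bool) (n : ℕ) (hn : 2 ≤ n) : Prop :=
  ∀ v : V,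
    (c v = true → BIso (G.induce (G.neighborSet v)) (fun x => c x.1)
      ((WB n).induce ((WB n).neighborSet (shortWBvertex n hn))) (fun x => WBcolor n x.1)) ∧
    (c v = false → BIso (G.induce (G.neighborSet v)) (fun x => c x.1)
      ((WB n).induce ((WB n).neighborSet (longWBvertex n hn))) (fun x => WBcolor n x.1))

theorem WBcolor_eq_true_iff {n : ℕ} {p : Fin n × Fin n} :
    WBcolor n p = true ↔ p.1 = p.2 := by
  simp [WBcolor]

theorem WBcolor_eq_false_iff {n : ℕ} {p : Fin n × Fin n} :
    WBcolor n p = false ↔ p.1 ≠ p.2 := by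
  simp [WBcolor]

namespace WB

variable {n : ℕ}

theorem adj_iff {p q : Fin n × Fin n} :
    (WB n).Adj p q ↔
      p ≠ q ∧ (Disjoint ({p.1, p.2} : Set (Fin n)) {q.1, q.2} ∨ q = p.swap) := by
  simp only [WB, Set.disjoint_iff_inter_eq_empty, Prod.ext_iff, Prod.fst_swap, Prod.snd_swap]

theorem adj_diag_left {a : Fin n} {p : Fin n × Fin n} :
    (WB n).Adj (a, a) p ↔ a ≠ p.1 ∧ a ≠ p.2 := by
  obtain ⟨i, j⟩ := p
  rw [adj_iff]
  constructor
  · rintro ⟨hne, hd | hswap⟩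
    · exact ⟨fun h => Set.disjoint_left.1 hd (show a ∈ _ by simp) (show a ∈ _ by simp [h]),
        fun h => Set.disjoint_left.1 hd (show a ∈ _ by simp) (show a ∈ _ by simp [h])⟩
    · simp_all
  · rintro ⟨h1, h2⟩
    refine ⟨by simp [Prod.ext_iff, h1], Or.inl ?_⟩
    simp [h1, h2]

theorem adj_iff_of_ne {p q : Fin n × Fin n} (hp : p.1 ≠ p.2) (hq : q.1 ≠ q.2) :
    (WB n).Adj p q ↔ p ≠ q ∧ (({p.1, p.2} : Set (Fin n)) = {q.1, q.2} ∨
      Disjoint ({p.1, p.2} : Set (Fin n)) {q.1, q.2}) := by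
  rw [adj_iff, Set.pair_eq_pair_iff]
  obtain ⟨i, j⟩ := p
  obtain ⟨k, l⟩ := q
  simp only [ne_eq, Prod.ext_iff, Prod.swap_prod_mk] at *
  grind

theorem exists_diag_adj_adj (hn : n = 3 ∨ 5 ≤ n) {p q : Fin n × Fin n} (hp : p.1 ≠ p.2)
    (hq : q.1 ≠ q.2) (hpq : (WB n).Adj p q) :
    ∃ k, (WB n).Adj (k, k) p ∧ (WB n).Adj (k, k) q := by
  suffices ∃ k, k ∉ ({p.1, p.2, q.1, q.2} : Finset (Fin n)) by
    obtain ⟨k, hk⟩ := this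
    simp only [Finset.mem_insert, Finset.mem_singleton, not_or] at hk
    exact ⟨k, adj_diag_left.2 ⟨hk.1, hk.2.1⟩, adj_diag_left.2 ⟨hk.2.2.1, hk.2.2.2⟩⟩
  have hcard : ({p.1, p.2, q.1, q.2} : Finset (Fin n)).card < n := by
    rcases ((adj_iff_of_ne hp hq).1 hpq).2 with heq | hdisj
    · have hsub : ({p.1, p.2, q.1, q.2} : Finset (Fin n)) ⊆ {p.1, p.2} := by
        rcases Set.pair_eq_pair_iff.1 heq with ⟨h1, h2⟩ | ⟨h1, h2⟩ <;>
          simp [Finset.insert_subset_iff, ← h1, ← h2]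
      have := (Finset.card_le_card hsub).trans Finset.card_le_two
      omega
    · have hne : ∀ x ∈ ({p.1, p.2} : Set (Fin n)), ∀ y ∈ ({q.1, q.2} : Set (Fin n)),
          x ≠ y :=
        fun x hx y hy => Set.disjoint_left.1 hdisj hx ∘ fun h => h ▸ hy
      have h4 : ({p.1, p.2, q.1, q.2} : Finset (Fin n)).card = 4 := by
        rw [Finset.card_insert_of_notMem, Finset.card_insert_of_notMem, Finset.card_pair] <;>
          simp_all
      have := Finset.card_le_univ ({p.1, p.2, q.1, q.2} : Finset (Fin n))
      rw [h4, Fintype.card_fin] at this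
      omega
  obtain ⟨k, -, hk⟩ := Finset.exists_mem_notMem_of_card_lt_card
    (hcard.trans_eq (Finset.card_fin n).symm)
  exact ⟨k, hk⟩

end WB

section LocalIso

variable {V W : Type*}

structure IsLocalIso (G : SimpleGraph V) (c : V → Bool) (H : SimpleGraph W) (d : W → Bool)
    (x : V) (y : W) (f : V → W) : Prop where
  map_center : f x = y
  bijOn : Set.BijOn f (insert x (G.neighborSet x)) (insert y (H.neighborSet y))
  color : ∀ u ∈ insert x (G.neighborSet x), d (f u) = c u
  adj_iff : ∀ u ∈ insert x (G.neighborSet x), ∀ v ∈ insert x (G.neighborSet x),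
    H.Adj (f u) (f v) ↔ G.Adj u v

theorem BIso.exists_isLocalIso {G : SimpleGraph V} {c : V → Bool} {H : SimpleGraph W}
    {d : W → Bool} {x : V} {y : W}
    (h : BIso (G.induce (G.neighborSet x)) (fun u => c u.1)
      (H.induce (H.neighborSet y)) (fun p => d p.1))
    (hxy : d y = c x) : ∃ f, IsLocalIso G c H d x y f := by
  classical
  obtain ⟨e, he⟩ := h
  let f : V → W := fun u => if hu : G.Adj x u then e ⟨u, hu⟩ else y
  have hfx : f x = y := dif_neg (G.loopless.irrefl x)
  have hf : ∀ u (hu : G.Adj x u), f u = e ⟨u, hu⟩ := fun u hu => dif_pos hu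
  have hfadj : ∀ u (hu : G.Adj x u), H.Adj y (f u) := fun u hu => hf u hu ▸ (e ⟨u, hu⟩).2
  refine ⟨f, hfx, ⟨?_, ?_, ?_⟩, ?_, ?_⟩
  · rintro u (rfl | hu)
    · exact hfx ▸ Set.mem_insert _ _
    · exact Set.mem_insert_of_mem _ (hfadj u hu)
  · rintro u (rfl | hu) v (rfl | hv) huv
    · rfl
    · exact absurd (hfadj v hv) (by rw [← huv, hfx]; exact H.loopless.irrefl y)
    · exact absurd (hfadj u hu) (by rw [huv, hfx]; exact H.loopless.irrefl y)
    · rw [hf u hu, hf v hv] at huv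
      exact congrArg Subtype.val (e.injective (Subtype.ext huv))
  · rintro p (rfl | hp)
    · exact ⟨x, Set.mem_insert _ _, hfx⟩
    · refine ⟨e.symm ⟨p, hp⟩, Set.mem_insert_of_mem _ (e.symm ⟨p, hp⟩).2, ?_⟩
      rw [hf _ (e.symm ⟨p, hp⟩).2]
      simp
  · rintro u (rfl | hu)
    · rw [hfx, hxy]
    · rw [hf u hu]
      exact he ⟨u, hu⟩
  · rintro u (rfl | hu) v (rfl | hv)
    · simp only [hfx, SimpleGraph.irrefl]
    · exact iff_of_true (hfx ▸ hfadj v hv) hv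
    · exact iff_of_true (hfx ▸ (hfadj u hu).symm) hu.symm
    · rw [hf u hu, hf v hv]
      exact e.map_adj_iff

theorem IsLocalIso.exists_adj_preimage {G : SimpleGraph V} {c : V → Bool} {H : SimpleGraph W}
    {d : W → Bool} {x : V} {y : W} {f : V → W} (hf : IsLocalIso G c H d x y f) {p : W}
    (hp : H.Adj y p) : ∃ u, G.Adj x u ∧ f u = p := by
  obtain ⟨u, hu | hu, rfl⟩ := hf.bijOn.surjOn (Set.mem_insert_of_mem _ hp)
  · subst hu
    exact absurd (hf.map_center ▸ hp) (H.loopless.irrefl y)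
  · exact ⟨u, hu, rfl⟩

end LocalIso

theorem Set.InjOn.disjoint_image_iff {α β : Type*} {f : α → β} {s A B : Set α}
    (h : s.InjOn f) (hA : A ⊆ s) (hB : B ⊆ s) :
    Disjoint (f '' A) (f '' B) ↔ Disjoint A B := by
  simp only [Set.disjoint_iff_inter_eq_empty, ← h.image_inter hA hB, Set.image_eq_empty]

def missedShorts {V : Type*} (G : SimpleGraph V) (c : V → Bool) (v : V) : Set V :=
  {z | c z = true ∧ ¬ G.Adj v z}

theorem missedShorts_subset {V : Type*} (G : SimpleGraph V) (c : V → Bool) (v : V) :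
    missedShorts G c v ⊆ {z | c z = true} :=
  fun _ hz => hz.1

theorem mem_insert_neighborSet_of_isClique {V : Type*} {G : SimpleGraph V} {S : Set V}
    (hS : G.IsClique S) {s z : V} (hs : s ∈ S) (hz : z ∈ S) :
    z ∈ insert s (G.neighborSet s) := by
  by_cases hzs : z = s
  · exact hzs ▸ Set.mem_insert z _
  · exact Set.mem_insert_of_mem _ (hS hs hz (Ne.symm hzs))

namespace IsLocalIso

variable {n : ℕ} {V : Type*} {G : SimpleGraph V} {c : V → Bool} {s : V} {y : Fin n × Fin n}
  {f : V → Fin n × Fin n}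

theorem fst_eq_snd (hf : IsLocalIso G c (WB n) (WBcolor n) s y f) {z : V}
    (hz : z ∈ insert s (G.neighborSet s)) (hcz : c z = true) : (f z).1 = (f z).2 :=
  WBcolor_eq_true_iff.1 ((hf.color z hz).trans hcz)

theorem fst_ne_snd (hf : IsLocalIso G c (WB n) (WBcolor n) s y f) {z : V}
    (hz : z ∈ insert s (G.neighborSet s)) (hcz : c z = false) : (f z).1 ≠ (f z).2 :=
  WBcolor_eq_false_iff.1 ((hf.color z hz).trans hcz)

theorem adj_of_short_of_short (hf : IsLocalIso G c (WB n) (WBcolor n) s y f) {u v : V}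
    (hu : u ∈ insert s (G.neighborSet s)) (hv : v ∈ insert s (G.neighborSet s))
    (hcu : c u = true) (hcv : c v = true) (huv : u ≠ v) : G.Adj u v := by
  have hdu := hf.fst_eq_snd hu hcu
  have hdv := hf.fst_eq_snd hv hcv
  have hne : (f u).1 ≠ (f v).1 := fun h =>
    huv (hf.bijOn.injOn hu hv (Prod.ext h (by rw [← hdu, ← hdv, h])))
  rw [← hf.adj_iff u hu v hv, show f u = ((f u).1, (f u).1) from Prod.ext rfl hdu.symm,
    WB.adj_diag_left]
  exact ⟨hne, hdv ▸ hne⟩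

theorem injOn_fst (hf : IsLocalIso G c (WB n) (WBcolor n) s y f)
    (hS : G.IsClique {v | c v = true}) (hs : c s = true) :
    Set.InjOn (fun z => (f z).1) {z | c z = true} := by
  intro a ha b hb hab
  have ha' := mem_insert_neighborSet_of_isClique hS hs ha
  have hb' := mem_insert_neighborSet_of_isClique hS hs hb
  refine hf.bijOn.injOn ha' hb' (Prod.ext hab ?_)
  rw [← hf.fst_eq_snd ha' ha, ← hf.fst_eq_snd hb' hb]
  exact hab

theorem exists_fst_eq (hf : IsLocalIso G c (WB n) (WBcolor n) s y f) (hs : c s = true)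
    (i : Fin n) : ∃ z, c z = true ∧ (f z).1 = i := by
  have hy : y.1 = y.2 := hf.map_center ▸ hf.fst_eq_snd (Set.mem_insert s _) hs
  by_cases hi : y.1 = i
  · exact ⟨s, hs, hf.map_center ▸ hi⟩
  · have hyi : (WB n).Adj y (i, i) := by
      rw [show y = (y.1, y.1) from Prod.ext rfl hy.symm, WB.adj_diag_left]
      exact ⟨hi, hi⟩
    obtain ⟨z, hz, hfz⟩ := hf.exists_adj_preimage hyi
    refine ⟨z, ?_, by rw [hfz]⟩
    rw [← hf.color z (Set.mem_insert_of_mem _ hz), hfz, WBcolor_eq_true_iff]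

theorem not_adj_iff (hf : IsLocalIso G c (WB n) (WBcolor n) s y f)
    (hS : G.IsClique {v | c v = true}) (hs : c s = true) {v z : V} (hsv : G.Adj s v)
    (hz : c z = true) : ¬ G.Adj v z ↔ (f z).1 = (f v).1 ∨ (f z).1 = (f v).2 := by
  have hv' : v ∈ insert s (G.neighborSet s) := Set.mem_insert_of_mem _ hsv
  have hz' := mem_insert_neighborSet_of_isClique hS hs hz
  rw [← hf.adj_iff v hv' z hz', (WB n).adj_comm,
    show f z = ((f z).1, (f z).1) from Prod.ext rfl (hf.fst_eq_snd hz' hz).symm, WB.adj_diag_left]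
  tauto

theorem image_fst_missedShorts (hf : IsLocalIso G c (WB n) (WBcolor n) s y f)
    (hS : G.IsClique {v | c v = true}) (hs : c s = true) {v : V} (hsv : G.Adj s v) :
    (fun z => (f z).1) '' missedShorts G c v = {(f v).1, (f v).2} := by
  ext i
  constructor
  · rintro ⟨z, ⟨hz, hvz⟩, rfl⟩
    exact (hf.not_adj_iff hS hs hsv hz).1 hvz
  · intro hi
    obtain ⟨z, hz, rfl⟩ := hf.exists_fst_eq hs i
    exact ⟨z, ⟨hz, (hf.not_adj_iff hS hs hsv hz).2 hi⟩, rfl⟩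

theorem missedShorts_eq (hf : IsLocalIso G c (WB n) (WBcolor n) s y f)
    (hS : G.IsClique {v | c v = true}) (hs : c s = true) {v a b : V} (hsv : G.Adj s v)
    (ha : c a = true) (hb : c b = true) (hfa : (f a).1 = (f v).1) (hfb : (f b).1 = (f v).2) :
    missedShorts G c v = {a, b} := by
  have hab : ({a, b} : Set V) ⊆ {z | c z = true} := by
    simp [Set.insert_subset_iff, ha, hb]
  rw [← (hf.injOn_fst hS hs).image_eq_image_iff (missedShorts_subset G c v) hab,
    hf.image_fst_missedShorts hS hs hsv, Set.image_pair, hfa, hfb]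

theorem eq_or_eq_swap_of_missedShorts_eq (hf : IsLocalIso G c (WB n) (WBcolor n) s y f)
    (hS : G.IsClique {v | c v = true}) (hs : c s = true) {u v : V} (hsu : G.Adj s u)
    (h : missedShorts G c u = missedShorts G c v) :
    G.Adj s v ∧ (f v = f u ∨ f v = (f u).swap) := by
  have hsv : G.Adj s v := by
    have hsM : s ∉ missedShorts G c v := h ▸ fun h => h.2 hsu.symm
    exact not_not.1 fun hsv => hsM ⟨hs, fun h => hsv h.symm⟩
  refine ⟨hsv, ?_⟩
  have hpair := hf.image_fst_missedShorts hS hs hsv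
  rw [← h, hf.image_fst_missedShorts hS hs hsu, Set.pair_eq_pair_iff] at hpair
  rcases hpair with ⟨h1, h2⟩ | ⟨h1, h2⟩
  · exact Or.inl (Prod.ext h1.symm h2.symm)
  · exact Or.inr (Prod.ext h2.symm h1.symm)

end IsLocalIso

def shortStar {V : Type*} (G : SimpleGraph V) (c : V → Bool) (v : V) : Set V :=
  {z ∈ insert v (G.neighborSet v) | c z = true}

namespace LocallyLikeWBn

variable {n : ℕ} {V : Type*} {G : SimpleGraph V} {c : V → Bool} {h2 : 2 ≤ n}

theorem exists_isLocalIso_short (hloc : LocallyLikeWBn G c n h2) {x : V} (hx : c x = true) :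
    ∃ f, IsLocalIso G c (WB n) (WBcolor n) x (shortWBvertex n h2) f :=
  ((hloc x).1 hx).exists_isLocalIso (by simp [WBcolor, shortWBvertex, hx])

theorem exists_isLocalIso_long (hloc : LocallyLikeWBn G c n h2) {x : V} (hx : c x = false) :
    ∃ f, IsLocalIso G c (WB n) (WBcolor n) x (longWBvertex n h2) f :=
  ((hloc x).2 hx).exists_isLocalIso (by simp [WBcolor, longWBvertex, hx])

theorem isClique_shortStar (hloc : LocallyLikeWBn G c n h2) (v : V) :
    G.IsClique (shortStar G c v) := by
  intro a ha b hb hab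
  cases hv : c v
  · obtain ⟨f, hf⟩ := hloc.exists_isLocalIso_long hv
    exact hf.adj_of_short_of_short ha.1 hb.1 ha.2 hb.2 hab
  · obtain ⟨f, hf⟩ := hloc.exists_isLocalIso_short hv
    exact hf.adj_of_short_of_short ha.1 hb.1 ha.2 hb.2 hab

theorem shortStar_subset_shortStar (hloc : LocallyLikeWBn G c n h2) {v z : V}
    (hz : z ∈ shortStar G c v) : shortStar G c v ⊆ shortStar G c z := by
  intro a ha
  refine ⟨?_, ha.2⟩
  by_cases haz : a = z
  · exact haz ▸ Set.mem_insert a _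
  · exact Set.mem_insert_of_mem _ (hloc.isClique_shortStar v hz ha (Ne.symm haz))

theorem exists_short_adj (hloc : LocallyLikeWBn G c n h2) (h3 : 3 ≤ n) {v : V}
    (hv : c v = false) : ∃ z, c z = true ∧ G.Adj v z := by
  obtain ⟨f, hf⟩ := hloc.exists_isLocalIso_long hv
  have hy : (WB n).Adj (longWBvertex n h2) (⟨2, by omega⟩, ⟨2, by omega⟩) :=
    (WB.adj_diag_left.2 (by simp [longWBvertex, Fin.ext_iff])).symm
  obtain ⟨z, hz, hfz⟩ := hf.exists_adj_preimage hy
  refine ⟨z, ?_, hz⟩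
  rw [← hf.color z (Set.mem_insert_of_mem _ hz), hfz, WBcolor_eq_true_iff]

theorem exists_short_adj_adj (hloc : LocallyLikeWBn G c n h2) (hn : n = 3 ∨ 5 ≤ n) {v w : V}
    (hv : c v = false) (hw : c w = false) (hvw : G.Adj v w) :
    ∃ z, c z = true ∧ G.Adj v z ∧ G.Adj w z := by
  obtain ⟨f, hf⟩ := hloc.exists_isLocalIso_long hv
  have hw' : w ∈ insert v (G.neighborSet v) := Set.mem_insert_of_mem _ hvw
  have hyw : (WB n).Adj (longWBvertex n h2) (f w) := by
    rw [← hf.map_center]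
    exact (hf.adj_iff v (Set.mem_insert _ _) w hw').2 hvw
  obtain ⟨k, hky, hkw⟩ := WB.exists_diag_adj_adj hn
    (by simp [longWBvertex]) (WBcolor_eq_false_iff.1 ((hf.color w hw').trans hw)) hyw
  obtain ⟨z, hz, hfz⟩ := hf.exists_adj_preimage hky.symm
  have hz' : z ∈ insert v (G.neighborSet v) := Set.mem_insert_of_mem _ hz
  refine ⟨z, ?_, hz, ?_⟩
  · rw [← hf.color z hz', hfz, WBcolor_eq_true_iff]
  · rw [← hf.adj_iff w hw' z hz', hfz]
    exact hkw.symm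

theorem exists_mem_shortStar_inter (hloc : LocallyLikeWBn G c n h2) (hn : n = 3 ∨ 5 ≤ n)
    {v w : V} (hvw : G.Adj v w) : ∃ z, z ∈ shortStar G c v ∧ z ∈ shortStar G c w := by
  cases hv : c v
  · cases hw : c w
    · obtain ⟨z, hz, hvz, hwz⟩ := hloc.exists_short_adj_adj hn hv hw hvw
      exact ⟨z, ⟨Set.mem_insert_of_mem _ hvz, hz⟩, ⟨Set.mem_insert_of_mem _ hwz, hz⟩⟩
    · exact ⟨w, ⟨Set.mem_insert_of_mem _ hvw, hw⟩, ⟨Set.mem_insert _ _, hw⟩⟩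
  · exact ⟨v, ⟨Set.mem_insert _ _, hv⟩, ⟨Set.mem_insert_of_mem _ hvw.symm, hv⟩⟩

theorem shortStar_subset_of_reachable (hloc : LocallyLikeWBn G c n h2) (hn : n = 3 ∨ 5 ≤ n)
    {x v : V} (hx : c x = true) (hxv : G.Reachable x v) : shortStar G c v ⊆ shortStar G c x := by
  rw [SimpleGraph.reachable_iff_reflTransGen] at hxv
  induction hxv with
  | refl => exact le_rfl
  | tail _ hvw ih =>
    obtain ⟨z, hzv, hzw⟩ := hloc.exists_mem_shortStar_inter hn hvw
    obtain ⟨hzx, hz⟩ := ih hzv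
    have hxz : x ∈ shortStar G c z := by
      refine ⟨?_, hx⟩
      rcases hzx with rfl | hzx
      · exact Set.mem_insert _ _
      · exact Set.mem_insert_of_mem _ hzx.symm
    exact (hloc.shortStar_subset_shortStar hzw).trans (hloc.shortStar_subset_shortStar hxz)

theorem isClique_shorts (hloc : LocallyLikeWBn G c n h2) (hn : n = 3 ∨ 5 ≤ n)
    (hconn : G.Preconnected) : G.IsClique {v | c v = true} := by
  intro a ha b hb hab
  have hbstar : b ∈ shortStar G c a :=
    hloc.shortStar_subset_of_reachable hn ha (hconn a b) ⟨Set.mem_insert _ _, hb⟩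
  exact hloc.isClique_shortStar a ⟨Set.mem_insert _ _, ha⟩ hbstar hab

theorem missedShorts_eq_pair (hloc : LocallyLikeWBn G c n h2) (h3 : 3 ≤ n)
    (hS : G.IsClique {v | c v = true}) {v : V} (hv : c v = false) :
    ∃ a b, a ≠ b ∧ missedShorts G c v = {a, b} := by
  obtain ⟨s, hs, hvs⟩ := hloc.exists_short_adj h3 hv
  obtain ⟨f, hf⟩ := hloc.exists_isLocalIso_short hs
  obtain ⟨a, ha, hfa⟩ := hf.exists_fst_eq hs (f v).1
  obtain ⟨b, hb, hfb⟩ := hf.exists_fst_eq hs (f v).2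
  refine ⟨a, b, ?_, hf.missedShorts_eq hS hs hvs.symm ha hb hfa hfb⟩
  rintro rfl
  exact hf.fst_ne_snd (Set.mem_insert_of_mem _ hvs.symm) hv (hfa.symm.trans hfb)

theorem missedShorts_eq_or_disjoint (hloc : LocallyLikeWBn G c n h2) (hn : n = 3 ∨ 5 ≤ n)
    (hS : G.IsClique {v | c v = true}) {u v : V} (hu : c u = false) (hv : c v = false)
    (huv : G.Adj u v) :
    missedShorts G c u = missedShorts G c v ∨
      Disjoint (missedShorts G c u) (missedShorts G c v) := by
  obtain ⟨s, hs, hus, hvs⟩ := hloc.exists_short_adj_adj hn hu hv huv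
  obtain ⟨f, hf⟩ := hloc.exists_isLocalIso_short hs
  have hu' : u ∈ insert s (G.neighborSet s) := Set.mem_insert_of_mem _ hus.symm
  have hv' : v ∈ insert s (G.neighborSet s) := Set.mem_insert_of_mem _ hvs.symm
  have hinj := hf.injOn_fst hS hs
  rw [← hinj.image_eq_image_iff (missedShorts_subset G c u) (missedShorts_subset G c v),
    ← hinj.disjoint_image_iff (missedShorts_subset G c u) (missedShorts_subset G c v),
    hf.image_fst_missedShorts hS hs hus.symm, hf.image_fst_missedShorts hS hs hvs.symm]
  exact ((WB.adj_iff_of_ne (hf.fst_ne_snd hu' hu) (hf.fst_ne_snd hv' hv)).1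
    ((hf.adj_iff u hu' v hv').2 huv)).2

theorem adj_of_disjoint_missedShorts (hloc : LocallyLikeWBn G c n h2) (hn : n = 3 ∨ 5 ≤ n)
    (hS : G.IsClique {v | c v = true}) (hcard : {v | c v = true}.ncard = n) {u v : V}
    (hu : c u = false) (hv : c v = false)
    (hdisj : Disjoint (missedShorts G c u) (missedShorts G c v)) : G.Adj u v := by
  have h3 : 3 ≤ n := by omega
  obtain ⟨a, b, hab, hMu⟩ := hloc.missedShorts_eq_pair h3 hS hu
  obtain ⟨a', b', hab', hMv⟩ := hloc.missedShorts_eq_pair h3 hS hv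
  have hfin : {v | c v = true}.Finite := Set.finite_of_ncard_ne_zero (by omega)
  have hsub : missedShorts G c u ∪ missedShorts G c v ⊆ {v | c v = true} :=
    Set.union_subset (missedShorts_subset G c u) (missedShorts_subset G c v)
  have h4 : (missedShorts G c u ∪ missedShorts G c v).ncard = 4 := by
    rw [Set.ncard_union_eq hdisj (hMu ▸ Set.toFinite _) (hMv ▸ Set.toFinite _), hMu, hMv,
      Set.ncard_pair hab, Set.ncard_pair hab']
  have hlt : (missedShorts G c u ∪ missedShorts G c v).ncard < {v | c v = true}.ncard := by
    have := Set.ncard_le_ncard hsub hfin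
    omega
  obtain ⟨s, hs, hsM⟩ := Set.exists_mem_notMem_of_ncard_lt_ncard hlt (hfin.subset hsub)
  have hus : G.Adj u s := not_not.1 fun h => hsM (Or.inl ⟨hs, h⟩)
  have hvs : G.Adj v s := not_not.1 fun h => hsM (Or.inr ⟨hs, h⟩)
  obtain ⟨f, hf⟩ := hloc.exists_isLocalIso_short hs
  have hu' : u ∈ insert s (G.neighborSet s) := Set.mem_insert_of_mem _ hus.symm
  have hv' : v ∈ insert s (G.neighborSet s) := Set.mem_insert_of_mem _ hvs.symm
  rw [← (hf.injOn_fst hS hs).disjoint_image_iff (missedShorts_subset G c u)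
    (missedShorts_subset G c v), hf.image_fst_missedShorts hS hs hus.symm,
    hf.image_fst_missedShorts hS hs hvs.symm] at hdisj
  rw [← hf.adj_iff u hu' v hv', WB.adj_iff_of_ne (hf.fst_ne_snd hu' hu) (hf.fst_ne_snd hv' hv)]
  refine ⟨fun h => ?_, Or.inr hdisj⟩
  rw [h] at hdisj
  exact Set.disjoint_left.1 hdisj (Set.mem_insert _ _) (Set.mem_insert _ _)

theorem adj_of_missedShorts_eq (hloc : LocallyLikeWBn G c n h2) (h3 : 3 ≤ n)
    (hS : G.IsClique {v | c v = true}) {u v : V} (hu : c u = false)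
    (huv : u ≠ v) (h : missedShorts G c u = missedShorts G c v) : G.Adj u v := by
  obtain ⟨s, hs, hus⟩ := hloc.exists_short_adj h3 hu
  obtain ⟨f, hf⟩ := hloc.exists_isLocalIso_short hs
  obtain ⟨hsv, hfv⟩ := hf.eq_or_eq_swap_of_missedShorts_eq hS hs hus.symm h
  have hu' : u ∈ insert s (G.neighborSet s) := Set.mem_insert_of_mem _ hus.symm
  have hv' : v ∈ insert s (G.neighborSet s) := Set.mem_insert_of_mem _ hsv
  have hne : f u ≠ f v := fun h => huv (hf.bijOn.injOn hu' hv' h)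
  rw [← hf.adj_iff u hu' v hv', WB.adj_iff]
  exact ⟨hne, Or.inr (hfv.resolve_left (Ne.symm hne))⟩

theorem eq_or_eq_or_eq_of_missedShorts_eq (hloc : LocallyLikeWBn G c n h2) (h3 : 3 ≤ n)
    (hS : G.IsClique {v | c v = true}) {u v w : V} (hu : c u = false)
    (huv : missedShorts G c u = missedShorts G c v)
    (huw : missedShorts G c u = missedShorts G c w) : u = v ∨ u = w ∨ v = w := by
  obtain ⟨s, hs, hus⟩ := hloc.exists_short_adj h3 hu
  obtain ⟨f, hf⟩ := hloc.exists_isLocalIso_short hs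
  obtain ⟨hsv, hfv⟩ := hf.eq_or_eq_swap_of_missedShorts_eq hS hs hus.symm huv
  obtain ⟨hsw, hfw⟩ := hf.eq_or_eq_swap_of_missedShorts_eq hS hs hus.symm huw
  have hu' : u ∈ insert s (G.neighborSet s) := Set.mem_insert_of_mem _ hus.symm
  have hv' : v ∈ insert s (G.neighborSet s) := Set.mem_insert_of_mem _ hsv
  have hw' : w ∈ insert s (G.neighborSet s) := Set.mem_insert_of_mem _ hsw
  rcases hfv with hfv | hfv
  · exact Or.inl (hf.bijOn.injOn hu' hv' hfv.symm)
  rcases hfw with hfw | hfw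
  · exact Or.inr (Or.inl (hf.bijOn.injOn hu' hw' hfw.symm))
  · exact Or.inr (Or.inr (hf.bijOn.injOn hv' hw' (hfv.trans hfw.symm)))

theorem exists_bijOn_shorts (hloc : LocallyLikeWBn G c n h2) (h3 : 3 ≤ n)
    (hS : G.IsClique {v | c v = true}) [Nonempty V] :
    ∃ σ : V → Fin n, Set.BijOn σ {v | c v = true} Set.univ := by
  obtain ⟨x, hx⟩ : ∃ x, c x = true := by
    obtain ⟨v⟩ := ‹Nonempty V›
    cases hv : c v
    · obtain ⟨z, hz, -⟩ := hloc.exists_short_adj h3 hv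
      exact ⟨z, hz⟩
    · exact ⟨v, hv⟩
  obtain ⟨f, hf⟩ := hloc.exists_isLocalIso_short hx
  refine ⟨fun z => (f z).1, Set.mapsTo_univ _ _, hf.injOn_fst hS hx, fun i _ => ?_⟩
  obtain ⟨z, hz, hfz⟩ := hf.exists_fst_eq hx i
  exact ⟨z, hz, hfz⟩

theorem exists_missedShorts_eq_pair (hloc : LocallyLikeWBn G c n h2) (h3 : 3 ≤ n)
    (hS : G.IsClique {v | c v = true}) (hcard : {v | c v = true}.ncard = n) {a b : V}
    (ha : c a = true) (hb : c b = true) (hab : a ≠ b) :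
    ∃ u v, c u = false ∧ c v = false ∧ u ≠ v ∧
      missedShorts G c u = {a, b} ∧ missedShorts G c v = {a, b} := by
  obtain ⟨s, hs, hsab⟩ := Set.exists_mem_notMem_of_ncard_lt_ncard
    (s := {a, b}) (t := {v | c v = true}) (by rw [Set.ncard_pair hab, hcard]; omega)
  obtain ⟨f, hf⟩ := hloc.exists_isLocalIso_short hs
  have hinj := hf.injOn_fst hS hs
  have hsa : (f s).1 ≠ (f a).1 := fun h => hsab (Or.inl (hinj hs ha h))
  have hsb : (f s).1 ≠ (f b).1 := fun h => hsab (Or.inr (hinj hs hb h))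
  have hij : (f a).1 ≠ (f b).1 := fun h => hab (hinj ha hb h)
  have hfs : shortWBvertex n h2 = ((f s).1, (f s).1) := by
    rw [← hf.map_center]
    exact Prod.ext rfl (hf.fst_eq_snd (Set.mem_insert s _) hs).symm
  have hlong : ∀ {i j : Fin n}, i ≠ j → (f s).1 ≠ i → (f s).1 ≠ j →
      ∃ u, c u = false ∧ G.Adj s u ∧ f u = (i, j) := by
    intro i j hij hi hj
    obtain ⟨u, hsu, hfu⟩ :=
      hf.exists_adj_preimage (hfs ▸ (WB.adj_diag_left (p := (i, j))).2 ⟨hi, hj⟩)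
    refine ⟨u, ?_, hsu, hfu⟩
    rw [← hf.color u (Set.mem_insert_of_mem _ hsu), hfu, WBcolor_eq_false_iff]
    exact hij
  obtain ⟨u, hu, hsu, hfu⟩ := hlong hij hsa hsb
  obtain ⟨v, hv, hsv, hfv⟩ := hlong hij.symm hsb hsa
  refine ⟨u, v, hu, hv, fun h => hij ?_, ?_, ?_⟩
  · rw [← h, hfu] at hfv
    exact (Prod.ext_iff.1 hfv).1
  · exact hf.missedShorts_eq hS hs hsu ha hb (by rw [hfu]) (by rw [hfu])
  · rw [Set.pair_comm]
    exact hf.missedShorts_eq hS hs hsv hb ha (by rw [hfv]) (by rw [hfv])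

theorem adj_iff_missedShorts (hloc : LocallyLikeWBn G c n h2) (hn : n = 3 ∨ 5 ≤ n)
    (hS : G.IsClique {v | c v = true}) (hcard : {v | c v = true}.ncard = n) {u v : V}
    (hu : c u = false) (hv : c v = false) :
    G.Adj u v ↔ u ≠ v ∧ (missedShorts G c u = missedShorts G c v ∨
      Disjoint (missedShorts G c u) (missedShorts G c v)) := by
  refine ⟨fun h => ⟨G.ne_of_adj h, hloc.missedShorts_eq_or_disjoint hn hS hu hv h⟩, ?_⟩
  rintro ⟨huv, heq | hdisj⟩
  · exact hloc.adj_of_missedShorts_eq (by omega) hS hu huv heq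
  · exact hloc.adj_of_disjoint_missedShorts hn hS hcard hu hv hdisj

end LocallyLikeWBn

theorem exists_orientation {ι α : Type*} [Nonempty ι] [Nonempty α] (L : Set ι)
    (m : ι → Set α)
    (hm : ∀ v ∈ L, ∃ a b, a ≠ b ∧ m v = {a, b})
    (hfib : ∀ u ∈ L, ∀ v ∈ L, ∀ w ∈ L, m u = m v → m u = m w →
      u = v ∨ u = w ∨ v = w) :
    ∃ o : ι → α × α, (∀ v ∈ L, (o v).1 ≠ (o v).2 ∧ m v = {(o v).1, (o v).2}) ∧
      ∀ u ∈ L, ∀ v ∈ L, u ≠ v → m u = m v → o u = (o v).swap := by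
  classical
  have hr : ∀ S : Set α, ∃ w, (∃ v ∈ L, m v = S) → w ∈ L ∧ m w = S := by
    intro S
    by_cases h : ∃ v ∈ L, m v = S
    · obtain ⟨v, hv, rfl⟩ := h
      exact ⟨v, fun _ => ⟨hv, rfl⟩⟩
    · exact ⟨Classical.arbitrary ι, fun h' => absurd h' h⟩
  have hq : ∀ S : Set α, ∃ q : α × α,
      (∃ a b, a ≠ b ∧ S = {a, b}) → q.1 ≠ q.2 ∧ S = {q.1, q.2} := by
    intro S
    by_cases h : ∃ a b, a ≠ b ∧ S = {a, b}
    · obtain ⟨a, b, hab, rfl⟩ := h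
      exact ⟨(a, b), fun _ => ⟨hab, rfl⟩⟩
    · exact ⟨Classical.arbitrary _, fun h' => absurd h' h⟩
  choose r hr using hr
  choose q hq using hq
  set o : ι → α × α := fun v => if v = r (m v) then q (m v) else (q (m v)).swap
  have ho_rep : ∀ v, v = r (m v) → o v = q (m v) := fun v h => if_pos h
  have ho_swap : ∀ v, v ≠ r (m v) → o v = (q (m v)).swap := fun v h => if_neg h
  refine ⟨o, fun v hv => ?_, fun u hu v hv huv hm_eq => ?_⟩
  · obtain ⟨hne, heq⟩ := hq (m v) (hm v hv)
    by_cases h : v = r (m v)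
    · rw [ho_rep v h]
      exact ⟨hne, heq⟩
    · rw [ho_swap v h]
      exact ⟨hne.symm, heq.trans (Set.pair_comm _ _)⟩
  · obtain ⟨hrL, hrm⟩ := hr (m u) ⟨u, hu, rfl⟩
    have hrv : r (m v) = r (m u) := by rw [hm_eq]
    rcases hfib _ hrL u hu v hv hrm (hrm.trans hm_eq) with h | h | h
    · rw [ho_rep u h.symm, ho_swap v (by rw [hrv, h]; exact huv.symm), Prod.swap_swap, hm_eq]
    · rw [ho_swap u (by rw [h]; exact huv), ho_rep v (by rw [hrv, h]), hm_eq]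
    · exact absurd h huv

section Recognition

variable {n : ℕ} {V : Type*} {G : SimpleGraph V} {c : V → Bool} {σ : V → Fin n}
  {o : V → V × V}

def toWB (c : V → Bool) (σ : V → Fin n) (o : V → V × V) (v : V) : Fin n × Fin n :=
  if c v = true then (σ v, σ v) else Prod.map σ σ (o v)

theorem toWB_of_short {v : V} (hv : c v = true) : toWB c σ o v = (σ v, σ v) := if_pos hv

theorem toWB_of_long {v : V} (hv : c v = false) : toWB c σ o v = Prod.map σ σ (o v) :=
  if_neg (by simp [hv])

theorem image_missedShorts_eq_toWB
    (ho : ∀ v, c v = false → (o v).1 ≠ (o v).2 ∧ missedShorts G c v = {(o v).1, (o v).2})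
    {v : V} (hv : c v = false) :
    σ '' missedShorts G c v = {(toWB c σ o v).1, (toWB c σ o v).2} := by
  rw [toWB_of_long hv, (ho v hv).2, Set.image_pair]
  rfl

theorem toWB_fst_ne_snd (hσ : Set.BijOn σ {v | c v = true} Set.univ)
    (ho : ∀ v, c v = false → (o v).1 ≠ (o v).2 ∧ missedShorts G c v = {(o v).1, (o v).2})
    {v : V} (hv : c v = false) : (toWB c σ o v).1 ≠ (toWB c σ o v).2 := by
  have hsub := (ho v hv).2 ▸ missedShorts_subset G c v
  rw [toWB_of_long hv]
  exact hσ.injOn.ne (hsub (Set.mem_insert _ _)) (hsub (Set.mem_insert_of_mem _ rfl)) (ho v hv).1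

theorem WBcolor_toWB (hσ : Set.BijOn σ {v | c v = true} Set.univ)
    (ho : ∀ v, c v = false → (o v).1 ≠ (o v).2 ∧ missedShorts G c v = {(o v).1, (o v).2})
    (v : V) : WBcolor n (toWB c σ o v) = c v := by
  cases hv : c v
  · exact WBcolor_eq_false_iff.2 (toWB_fst_ne_snd hσ ho hv)
  · rw [toWB_of_short hv, WBcolor_eq_true_iff]

theorem toWB_injective (hσ : Set.BijOn σ {v | c v = true} Set.univ)
    (ho : ∀ v, c v = false → (o v).1 ≠ (o v).2 ∧ missedShorts G c v = {(o v).1, (o v).2})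
    (hswap : ∀ u, c u = false → ∀ v, c v = false → u ≠ v →
      missedShorts G c u = missedShorts G c v → o u = (o v).swap) :
    Function.Injective (toWB c σ o) := by
  intro u v h
  have hc : c u = c v := by rw [← WBcolor_toWB hσ ho u, h, WBcolor_toWB hσ ho v]
  cases hu : c u
  · have hv := hc ▸ hu
    have hM : missedShorts G c u = missedShorts G c v := by
      rw [← hσ.injOn.image_eq_image_iff (missedShorts_subset G c u) (missedShorts_subset G c v),
        image_missedShorts_eq_toWB ho hu, image_missedShorts_eq_toWB ho hv, h]
    by_contra huv
    have hsw : toWB c σ o u = (toWB c σ o v).swap := by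
      rw [toWB_of_long hu, toWB_of_long hv, hswap u hu v hv huv hM]
      rfl
    exact toWB_fst_ne_snd hσ ho hv (Prod.ext_iff.1 (h.symm.trans hsw)).1
  · have hv : c v = true := hc ▸ hu
    rw [toWB_of_short hu, toWB_of_short hv] at h
    exact hσ.injOn hu hv (Prod.ext_iff.1 h).1

theorem toWB_surjective (hσ : Set.BijOn σ {v | c v = true} Set.univ)
    (ho : ∀ v, c v = false → (o v).1 ≠ (o v).2 ∧ missedShorts G c v = {(o v).1, (o v).2})
    (hswap : ∀ u, c u = false → ∀ v, c v = false → u ≠ v →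
      missedShorts G c u = missedShorts G c v → o u = (o v).swap)
    (hpair : ∀ a b, c a = true → c b = true → a ≠ b →
      ∃ u v, c u = false ∧ c v = false ∧ u ≠ v ∧
        missedShorts G c u = {a, b} ∧ missedShorts G c v = {a, b}) :
    Function.Surjective (toWB c σ o) := by
  rintro ⟨i, j⟩
  obtain ⟨a, ha, rfl⟩ := hσ.surjOn (Set.mem_univ i)
  obtain ⟨b, hb, rfl⟩ := hσ.surjOn (Set.mem_univ j)
  by_cases hab : a = b
  · exact ⟨a, by rw [toWB_of_short ha, hab]⟩
  obtain ⟨u, v, hu, hv, huv, hMu, hMv⟩ := hpair a b ha hb hab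
  have hovu := hswap v hv u hu (Ne.symm huv) (hMv.trans hMu.symm)
  rcases Set.pair_eq_pair_iff.1 (hMu.symm.trans (ho u hu).2) with ⟨h1, h2⟩ | ⟨h1, h2⟩
  · exact ⟨u, by rw [toWB_of_long hu, h1, h2]; rfl⟩
  · exact ⟨v, by rw [toWB_of_long hv, hovu, h1, h2]; rfl⟩

theorem adj_toWB_iff_of_short (hσ : Set.BijOn σ {v | c v = true} Set.univ)
    (ho : ∀ v, c v = false → (o v).1 ≠ (o v).2 ∧ missedShorts G c v = {(o v).1, (o v).2})
    (hS : G.IsClique {v | c v = true}) {u v : V} (hu : c u = true) :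
    (WB n).Adj (toWB c σ o u) (toWB c σ o v) ↔ G.Adj u v := by
  rw [toWB_of_short hu, WB.adj_diag_left]
  cases hv : c v
  · have key := hσ.injOn.mem_image_iff (missedShorts_subset G c v) hu
    rw [image_missedShorts_eq_toWB ho hv] at key
    simp only [Set.mem_insert_iff, Set.mem_singleton_iff, missedShorts, Set.mem_ofPred_eq, hu,
      true_and] at key
    rw [G.adj_comm]
    tauto
  · rw [toWB_of_short hv, and_self, hσ.injOn.ne_iff hu hv]
    exact ⟨fun huv => hS hu hv huv, G.ne_of_adj⟩

theorem adj_toWB_iff (hσ : Set.BijOn σ {v | c v = true} Set.univ)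
    (ho : ∀ v, c v = false → (o v).1 ≠ (o v).2 ∧ missedShorts G c v = {(o v).1, (o v).2})
    (hS : G.IsClique {v | c v = true})
    (hswap : ∀ u, c u = false → ∀ v, c v = false → u ≠ v →
      missedShorts G c u = missedShorts G c v → o u = (o v).swap)
    (hadj : ∀ u v, c u = false → c v = false → (G.Adj u v ↔ u ≠ v ∧
      (missedShorts G c u = missedShorts G c v ∨
        Disjoint (missedShorts G c u) (missedShorts G c v))))
    (u v : V) : (WB n).Adj (toWB c σ o u) (toWB c σ o v) ↔ G.Adj u v := by
  cases hu : c u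
  · cases hv : c v
    · have hsub := missedShorts_subset G c
      rw [hadj u v hu hv, WB.adj_iff_of_ne (toWB_fst_ne_snd hσ ho hu) (toWB_fst_ne_snd hσ ho hv),
        (toWB_injective hσ ho hswap).ne_iff, ← image_missedShorts_eq_toWB ho hu,
        ← image_missedShorts_eq_toWB ho hv, hσ.injOn.image_eq_image_iff (hsub u) (hsub v),
        hσ.injOn.disjoint_image_iff (hsub u) (hsub v)]
    · rw [(WB n).adj_comm, G.adj_comm]
      exact adj_toWB_iff_of_short hσ ho hS hv
  · exact adj_toWB_iff_of_short hσ ho hS hu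

theorem biso_WB_of_missedShorts (hσ : Set.BijOn σ {v | c v = true} Set.univ)
    (ho : ∀ v, c v = false → (o v).1 ≠ (o v).2 ∧ missedShorts G c v = {(o v).1, (o v).2})
    (hS : G.IsClique {v | c v = true})
    (hswap : ∀ u, c u = false → ∀ v, c v = false → u ≠ v →
      missedShorts G c u = missedShorts G c v → o u = (o v).swap)
    (hadj : ∀ u v, c u = false → c v = false → (G.Adj u v ↔ u ≠ v ∧
      (missedShorts G c u = missedShorts G c v ∨
        Disjoint (missedShorts G c u) (missedShorts G c v))))
    (hpair : ∀ a b, c a = true → c b = true → a ≠ b →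
      ∃ u v, c u = false ∧ c v = false ∧ u ≠ v ∧
        missedShorts G c u = {a, b} ∧ missedShorts G c v = {a, b}) :
    BIso G c (WB n) (WBcolor n) :=
  ⟨⟨Equiv.ofBijective (toWB c σ o)
      ⟨toWB_injective hσ ho hswap, toWB_surjective hσ ho hswap hpair⟩,
    fun {u v} => adj_toWB_iff hσ ho hS hswap hadj u v⟩, WBcolor_toWB hσ ho⟩

end Recognition

theorem stmt2 (n : ℕ) (hn : n = 3 ∨ 5 ≤ n) {V : Type} (G : SimpleGraph V) (c : V → Bool)
    (hconn : G.Connected)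
    (hloc : LocallyLikeWBn G c n (by rcases hn with h | h <;> omega)) :
    BIso G c (WB n) (WBcolor n) := by
  have h3 : 3 ≤ n := by omega
  have hS := hloc.isClique_shorts hn hconn.preconnected
  have := hconn.nonempty
  obtain ⟨σ, hσ⟩ := hloc.exists_bijOn_shorts h3 hS
  have hcard : {v | c v = true}.ncard = n := by simpa using hσ.ncard_eq
  obtain ⟨o, ho, hswap⟩ := exists_orientation {v | c v = false} (missedShorts G c)
    (fun v hv => hloc.missedShorts_eq_pair h3 hS hv)
    (fun u hu v _ w _ => hloc.eq_or_eq_or_eq_of_missedShorts_eq h3 hS hu)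
  exact biso_WB_of_missedShorts hσ ho hS hswap
    (fun u v hu hv => hloc.adj_iff_missedShorts hn hS hcard hu hv)
    (fun a b ha hb hab => hloc.exists_missedShorts_eq_pair h3 hS hcard ha hb hab)
end

section
/- Let Γ be a bichromatic graph that is locally like W(F4). Then every connected component of the induced subgraph of Γ on the short vertices is a clique on exactly 4 vertices, and every connected component of the induced subgraph of Γ on the long vertices is a clique on exactly 4 vertices. -/
/-- The coloring of `W(Cₙ)`: obtained from `W(Bₙ)` by exchanging short and long vertices. -/
def WCcolor (n : ℕ) (p : Fin n × Fin n) : Bool := !(WBcolor n p)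

/-- A bichromatic graph is locally like `W(F₄)` if the local graph at every short vertex
is isomorphic to `W(B₃)` and the local graph at every long vertex is isomorphic to `W(C₃)`. -/
def LocallyLikeWF4 {V : Type*} (G : SimpleGraph V) (c : V → Bool) : Prop :=
  ∀ v : V,
    (c v = true → BIso (G.induce (G.neighborSet v)) (fun x => c x.1) (WB 3) (WBcolor 3)) ∧
    (c v = false → BIso (G.induce (G.neighborSet v)) (fun x => c x.1) (WB 3) (WCcolor 3))


/-! In both `W(B₃)` and `W(C₃)` the vertices having the type of the centre are exactly the
diagonal `y_{1,1}, y_{2,2}, y_{3,3}`, which form a triangle. So in the monochromatic subgraph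
every neighbourhood is a triangle. In a graph in which every neighbourhood is a clique, the closed
neighbourhood `N[v]` is closed under adjacency: a neighbour `w` of some `u ∈ N(v)` lies, together
with `v`, in the clique `N(u)`. Hence the component of `v` is the clique `N[v]`, of size `1 + 3`. -/

namespace SimpleGraph

variable {V W : Type*} {G : SimpleGraph V} {K : SimpleGraph W}

theorem IsClique.preimage (f : G ↪g K) {s : Set W} (h : K.IsClique s) :
    G.IsClique (f ⁻¹' s) :=
  fun _ hx _ hy hne => f.map_adj_iff.1 (h hx hy (f.injective.ne hne))

theorem image_val_neighborSet_induce (s : Set V) (v : s) :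
    Subtype.val '' (G.induce s).neighborSet v = s ∩ G.neighborSet v := by
  rw [neighborSet_induce, Subtype.image_preimage_coe]

theorem eq_or_adj_of_reachable (hG : ∀ u, G.IsClique (G.neighborSet u)) {v w : V}
    (h : G.Reachable v w) : v = w ∨ G.Adj v w := by
  obtain ⟨p⟩ := h
  induction p with
  | nil => exact .inl rfl
  | @cons v u w hvu _ ih =>
    rcases ih with rfl | huw
    · exact .inr hvu
    · exact (eq_or_ne v w).imp id (hG u hvu.symm huw)

theorem setOf_reachable_eq_insert_neighborSet (hG : ∀ u, G.IsClique (G.neighborSet u)) (v : V) :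
    {w | G.Reachable v w} = insert v (G.neighborSet v) := by
  ext w
  refine ⟨fun h => (eq_or_adj_of_reachable hG h).imp Eq.symm id, ?_⟩
  rintro (rfl | hvw)
  · exact Reachable.refl w
  · exact hvw.reachable

theorem isClique_insert_neighborSet {v : V} (h : G.IsClique (G.neighborSet v)) :
    G.IsClique (insert v (G.neighborSet v)) :=
  h.insert fun _ hw _ => hw

end SimpleGraph

theorem Set.ncard_diagonal (α : Type*) : (Set.diagonal α).ncard = Nat.card α := by
  rw [← Set.range_diag, Set.ncard_range_of_injective Function.diag_injective]

open SimpleGraph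

theorem WB_isClique_diagonal (n : ℕ) : (WB n).IsClique (Set.diagonal (Fin n)) := by
  rw [← Set.range_diag]
  rintro _ ⟨i, rfl⟩ _ ⟨j, rfl⟩ hne
  have hij : i ≠ j := fun h => hne (h ▸ rfl)
  refine ⟨hne, .inl ?_⟩
  simp [hij]

namespace LocallyLikeWF4

variable {V : Type*} {G : SimpleGraph V} {c : V → Bool}

theorem exists_iso_WB_color_eq_iff_mem_diagonal (hloc : LocallyLikeWF4 G c) (v : V) :
    ∃ e : G.induce (G.neighborSet v) ≃g WB 3,
      ∀ x, c x.1 = c v ↔ e x ∈ Set.diagonal (Fin 3) := by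
  cases hv : c v
  · obtain ⟨e, he⟩ := (hloc v).2 hv
    exact ⟨e, fun x => by simp [← he x, WCcolor, WBcolor, Set.diagonal]⟩
  · obtain ⟨e, he⟩ := (hloc v).1 hv
    exact ⟨e, fun x => by simp [← he x, WBcolor, Set.diagonal]⟩

theorem isClique_inter_neighborSet_and_ncard_eq_three (hloc : LocallyLikeWF4 G c) (v : V) :
    G.IsClique ({w | c w = c v} ∩ G.neighborSet v) ∧
      ({w | c w = c v} ∩ G.neighborSet v).ncard = 3 := by
  obtain ⟨e, he⟩ := hloc.exists_iso_WB_color_eq_iff_mem_diagonal v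
  have hT : {w | c w = c v} ∩ G.neighborSet v = Subtype.val '' (e ⁻¹' Set.diagonal (Fin 3)) := by
    ext w
    constructor
    · rintro ⟨hc, hadj⟩
      exact ⟨⟨w, hadj⟩, (he _).1 hc, rfl⟩
    · rintro ⟨x, hx, rfl⟩
      exact ⟨(he x).2 hx, x.2⟩
  rw [hT, ← isClique_induce_iff, Set.ncard_image_of_injective _ Subtype.val_injective,
    Set.ncard_preimage_of_injective_subset_range e.injective (by simp [e.surjective.range_eq]),
    Set.ncard_diagonal, Nat.card_fin]
  exact ⟨(WB_isClique_diagonal 3).preimage e.toEmbedding, rfl⟩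

theorem isClique_neighborSet_induce_and_ncard_eq_three (hloc : LocallyLikeWF4 G c) (b : Bool)
    (v : {x | c x = b}) :
    (G.induce {x | c x = b}).IsClique ((G.induce {x | c x = b}).neighborSet v) ∧
      ((G.induce {x | c x = b}).neighborSet v).ncard = 3 := by
  obtain ⟨v, rfl⟩ := v
  rw [isClique_induce_iff, ← Set.ncard_image_of_injective _ Subtype.val_injective,
    image_val_neighborSet_induce]
  exact hloc.isClique_inter_neighborSet_and_ncard_eq_three v

end LocallyLikeWF4

theorem monochromatic_components_are_4_cliques {V : Type} (G : SimpleGraph V) (c : V → Bool)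
    (hloc : LocallyLikeWF4 G c) (b : Bool) (v : ↥{x : V | c x = b}) :
    (G.induce {x : V | c x = b}).IsClique {w : ↥{x : V | c x = b} | (G.induce {x : V | c x = b}).Reachable v w} ∧
    {w : ↥{x : V | c x = b} | (G.induce {x : V | c x = b}).Reachable v w}.ncard = 4 := by
  set H := G.induce {x : V | c x = b}
  have hH := hloc.isClique_neighborSet_induce_and_ncard_eq_three b
  obtain ⟨hclique, hcard⟩ := hH v
  rw [setOf_reachable_eq_insert_neighborSet (fun u => (hH u).1) v]
  refine ⟨isClique_insert_neighborSet hclique, ?_⟩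
  rw [Set.ncard_insert_of_notMem (H.notMem_neighborSet_self)
    (Set.finite_of_ncard_pos (by rw [hcard]; norm_num)), hcard]
end

section
/- Let Γ be a bichromatic graph that is locally like W(F4), and let x_1, x_2, x_3, x_4 be four pairwise adjacent short vertices of Γ. Then the set of long vertices adjacent to at least one of x_1, x_2, x_3, x_4 has exactly 12 elements. Moreover, if {i,j} and {k,l} are distinct 2-element subsets of {1,2,3,4} with {i,j} ∩ {k,l} ≠ ∅, if y is a long vertex adjacent to both x_i and x_j, and y' is a long vertex adjacent to both x_k and x_l, then y and y' are not adjacent. -/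
/-!
At a short vertex the local graph is `W(B₃)`, whose short vertices are the three `y_{k,k}` and
whose six long vertices `y_{i,j}` are each adjacent to exactly one of them, namely `y_{k,k}` with
`{i, j, k} = {1, 2, 3}`. At `x_i` these three short vertices are the other `x_j`. Hence every long
neighbour of the clique is adjacent to exactly two of the `x_i`, and as each `x_i` has six long
neighbours, counting the adjacent pairs `(x_i, y)` with `y` long in two ways gives `2 · N = 4 · 6`
for the number `N` of long neighbours of the clique.
In `W(B₃)` the long neighbours of two different short vertices are never adjacent; read in the
local graph at the index common to the two pairs, this is the second claim.
-/

theorem WB_adj_iff {n : ℕ} {p q : Fin n × Fin n} :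
    (WB n).Adj p q ↔ p ≠ q ∧ ((p.1 ≠ q.1 ∧ p.1 ≠ q.2 ∧ p.2 ≠ q.1 ∧ p.2 ≠ q.2) ∨
      (q.1 = p.2 ∧ q.2 = p.1)) := by
  simp [WB, Set.eq_empty_iff_forall_notMem, and_assoc]

instance {n : ℕ} : DecidableRel (WB n).Adj := fun _ _ => decidable_of_iff' _ WB_adj_iff

theorem BIso.ncard_setOf_color_eq {V W : Type*} {G : SimpleGraph V} {cG : V → Bool}
    {H : SimpleGraph W} {cH : W → Bool} (h : BIso G cG H cH) (b : Bool) :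
    {v | cG v = b}.ncard = {w | cH w = b}.ncard := by
  obtain ⟨e, he⟩ := h
  exact Set.ncard_congr' (e.toEquiv.subtypeEquiv fun v => by simp [he])

theorem WB3_ncard_long : {q : Fin 3 × Fin 3 | WBcolor 3 q = false}.ncard = 6 := by
  rw [Set.ncard_eq_toFinset_card']
  decide

theorem WB3_not_adj_of_adj_short : ∀ s₁ s₂ q : Fin 3 × Fin 3, WBcolor 3 s₁ = true →
    WBcolor 3 s₂ = true → s₁ ≠ s₂ → WBcolor 3 q = false → (WB 3).Adj s₁ q →
    ¬ (WB 3).Adj s₂ q := by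
  decide

set_option synthInstance.maxSize 400 in
theorem WB3_adj_of_three_short : ∀ s₁ s₂ s₃ q : Fin 3 × Fin 3, WBcolor 3 s₁ = true →
    WBcolor 3 s₂ = true → WBcolor 3 s₃ = true → s₁ ≠ s₂ → s₁ ≠ s₃ → s₂ ≠ s₃ →
    WBcolor 3 q = false → (WB 3).Adj s₁ q ∨ (WB 3).Adj s₂ q ∨ (WB 3).Adj s₃ q := by
  decide

theorem WB3_not_adj_long_of_adj_short : ∀ s₁ s₂ q₁ q₂ : Fin 3 × Fin 3, WBcolor 3 s₁ = true →
    WBcolor 3 s₂ = true → s₁ ≠ s₂ → WBcolor 3 q₁ = false → WBcolor 3 q₂ = false →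
    (WB 3).Adj s₁ q₁ → (WB 3).Adj s₂ q₂ → ¬ (WB 3).Adj q₁ q₂ := by
  decide

theorem Finset.exists_mem_notMem_of_ne_of_card_eq {α : Type*} {s t : Finset α} (h : s ≠ t)
    (hcard : s.card = t.card) : ∃ a ∈ s, a ∉ t := by
  by_contra! hst
  exact h (Finset.eq_of_subset_of_card_le hst hcard.ge)

section LocallyLikeWF4

variable {V : Type*} {G : SimpleGraph V} {c : V → Bool}

theorem ncard_long_adj_of_short (hloc : LocallyLikeWF4 G c) {v : V} (hv : c v = true) :
    {y | c y = false ∧ G.Adj v y}.ncard = 6 := by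
  have hlocal := ((hloc v).1 hv).ncard_setOf_color_eq false
  rw [WB3_ncard_long, ← Set.ncard_image_of_injective _ Subtype.val_injective] at hlocal
  rw [← hlocal]
  congr 1
  ext y
  simp

theorem not_adj_of_adj_short (hloc : LocallyLikeWF4 G c) {v u₁ u₂ y : V} (hv : c v = true)
    (hu₁ : c u₁ = true) (hu₂ : c u₂ = true) (hne : u₁ ≠ u₂) (hvu₁ : G.Adj v u₁)
    (hvu₂ : G.Adj v u₂) (hy : c y = false) (hvy : G.Adj v y) (hu₁y : G.Adj u₁ y) :
    ¬ G.Adj u₂ y := by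
  obtain ⟨e, he⟩ := (hloc v).1 hv
  exact fun hu₂y => WB3_not_adj_of_adj_short (e ⟨u₁, hvu₁⟩) (e ⟨u₂, hvu₂⟩) (e ⟨y, hvy⟩)
    ((he _).trans hu₁) ((he _).trans hu₂) (e.injective.ne (Subtype.coe_ne_coe.mp hne))
    ((he _).trans hy) (e.map_adj_iff.mpr hu₁y) (e.map_adj_iff.mpr hu₂y)

theorem adj_of_three_short (hloc : LocallyLikeWF4 G c) {v u₁ u₂ u₃ y : V} (hv : c v = true)
    (hu₁ : c u₁ = true) (hu₂ : c u₂ = true) (hu₃ : c u₃ = true) (h₁₂ : u₁ ≠ u₂)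
    (h₁₃ : u₁ ≠ u₃) (h₂₃ : u₂ ≠ u₃) (hvu₁ : G.Adj v u₁) (hvu₂ : G.Adj v u₂)
    (hvu₃ : G.Adj v u₃) (hy : c y = false) (hvy : G.Adj v y) :
    G.Adj u₁ y ∨ G.Adj u₂ y ∨ G.Adj u₃ y := by
  obtain ⟨e, he⟩ := (hloc v).1 hv
  exact (WB3_adj_of_three_short (e ⟨u₁, hvu₁⟩) (e ⟨u₂, hvu₂⟩)
    (e ⟨u₃, hvu₃⟩) (e ⟨y, hvy⟩) ((he _).trans hu₁) ((he _).trans hu₂) ((he _).trans hu₃)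
    (e.injective.ne (Subtype.coe_ne_coe.mp h₁₂)) (e.injective.ne (Subtype.coe_ne_coe.mp h₁₃))
    (e.injective.ne (Subtype.coe_ne_coe.mp h₂₃)) ((he _).trans hy)).imp e.map_adj_iff.mp
    (Or.imp e.map_adj_iff.mp e.map_adj_iff.mp)

theorem not_adj_long_of_adj_short (hloc : LocallyLikeWF4 G c) {v u₁ u₂ y₁ y₂ : V}
    (hv : c v = true) (hu₁ : c u₁ = true) (hu₂ : c u₂ = true) (hne : u₁ ≠ u₂)
    (hvu₁ : G.Adj v u₁) (hvu₂ : G.Adj v u₂) (hy₁ : c y₁ = false) (hy₂ : c y₂ = false)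
    (hvy₁ : G.Adj v y₁) (hvy₂ : G.Adj v y₂) (hu₁y₁ : G.Adj u₁ y₁) (hu₂y₂ : G.Adj u₂ y₂) :
    ¬ G.Adj y₁ y₂ := by
  obtain ⟨e, he⟩ := (hloc v).1 hv
  exact fun hy₁y₂ => WB3_not_adj_long_of_adj_short (e ⟨u₁, hvu₁⟩) (e ⟨u₂, hvu₂⟩)
    (e ⟨y₁, hvy₁⟩) (e ⟨y₂, hvy₂⟩) ((he _).trans hu₁) ((he _).trans hu₂)
    (e.injective.ne (Subtype.coe_ne_coe.mp hne)) ((he _).trans hy₁) ((he _).trans hy₂)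
    (e.map_adj_iff.mpr hu₁y₁) (e.map_adj_iff.mpr hu₂y₂) (e.map_adj_iff.mpr hy₁y₂)

theorem not_adj_long_of_short_clique {ι : Type*} [DecidableEq ι] {x : ι → V}
    (hloc : LocallyLikeWF4 G c)
    (hshort : ∀ i, c (x i) = true) (hadj : ∀ i j, i ≠ j → G.Adj (x i) (x j))
    {p q : Finset ι} (hpq : p ≠ q) (hcard : p.card = q.card) (hmeet : (p ∩ q).Nonempty)
    {y y' : V} (hy : c y = false) (hy' : c y' = false) (hpy : ∀ i ∈ p, G.Adj (x i) y)
    (hqy' : ∀ i ∈ q, G.Adj (x i) y') : ¬ G.Adj y y' := by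
  obtain ⟨m, hm⟩ := hmeet
  rw [Finset.mem_inter] at hm
  obtain ⟨a, hap, haq⟩ := Finset.exists_mem_notMem_of_ne_of_card_eq hpq hcard
  obtain ⟨b, hbq, hbp⟩ := Finset.exists_mem_notMem_of_ne_of_card_eq hpq.symm hcard.symm
  have hab : a ≠ b := fun h => haq (h ▸ hbq)
  have hma : m ≠ a := fun h => haq (h ▸ hm.2)
  have hmb : m ≠ b := fun h => hbp (h ▸ hm.1)
  exact not_adj_long_of_adj_short hloc (hshort m) (hshort a) (hshort b) (hadj a b hab).ne
    (hadj m a hma) (hadj m b hmb) hy hy' (hpy m hm.1) (hqy' m hm.2) (hpy a hap) (hqy' b hbq)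

variable {x : Fin 4 → V}

theorem exists_ne_adj_of_short_clique (hloc : LocallyLikeWF4 G c) (hshort : ∀ i, c (x i) = true)
    (hadj : ∀ i j, i ≠ j → G.Adj (x i) (x j)) {y : V} (hy : c y = false) {i : Fin 4}
    (hi : G.Adj (x i) y) : ∃ j ≠ i, G.Adj (x j) y := by
  obtain ⟨a, b, d, hab, had, hbd, hcompl⟩ :=
    Finset.card_eq_three.mp (by simp [Finset.card_compl] : ({i}ᶜ : Finset (Fin 4)).card = 3)
  have hothers : ∀ j, j ≠ i ↔ j = a ∨ j = b ∨ j = d := fun j => by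
    simpa using Finset.ext_iff.mp hcompl j
  have ha := (hothers a).2 (by simp)
  have hb := (hothers b).2 (by simp)
  have hd := (hothers d).2 (by simp)
  rcases adj_of_three_short hloc (hshort i) (hshort a) (hshort b) (hshort d) (hadj a b hab).ne
      (hadj a d had).ne (hadj b d hbd).ne (hadj i a ha.symm) (hadj i b hb.symm)
      (hadj i d hd.symm) hy hi with h | h | h
  exacts [⟨a, ha, h⟩, ⟨b, hb, h⟩, ⟨d, hd, h⟩]

theorem card_filter_adj_eq_two_of_short_clique (hloc : LocallyLikeWF4 G c)
    (hshort : ∀ i, c (x i) = true) (hadj : ∀ i j, i ≠ j → G.Adj (x i) (x j))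
    [DecidableRel G.Adj] {y : V} (hy : c y = false) {i : Fin 4} (hi : G.Adj (x i) y) :
    (Finset.univ.filter fun k => G.Adj (x k) y).card = 2 := by
  obtain ⟨j, hji, hj⟩ := exists_ne_adj_of_short_clique hloc hshort hadj hy hi
  refine Finset.card_eq_two.mpr ⟨i, j, hji.symm, Finset.ext fun k => ?_⟩
  simp only [Finset.mem_filter, Finset.mem_univ, true_and, Finset.mem_insert,
    Finset.mem_singleton]
  refine ⟨fun hk => ?_, by rintro (rfl | rfl) <;> assumption⟩
  by_contra! hkij
  exact not_adj_of_adj_short hloc (hshort i) (hshort j) (hshort k) (hadj j k hkij.2.symm).ne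
    (hadj i j hji.symm) (hadj i k hkij.1.symm) hy hi hj hk

theorem ncard_long_adj_short_clique (hloc : LocallyLikeWF4 G c)
    (hshort : ∀ i, c (x i) = true) (hadj : ∀ i j, i ≠ j → G.Adj (x i) (x j)) :
    {y | c y = false ∧ ∃ i, G.Adj (x i) y}.ncard = 12 := by
  classical
  set S := {y | c y = false ∧ ∃ i, G.Adj (x i) y}
  have hfin : S.Finite := by
    refine (Set.finite_iUnion fun i => Set.finite_of_ncard_ne_zero
      ((ncard_long_adj_of_short hloc (hshort i)).trans_ne (by norm_num))).subset ?_
    rintro y ⟨hy, i, hi⟩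
    exact Set.mem_iUnion.mpr ⟨i, hy, hi⟩
  have hsix : ∀ i, (hfin.toFinset.filter (G.Adj (x i))).card = 6 := fun i => by
    rw [← Set.ncard_coe_finset, ← ncard_long_adj_of_short hloc (hshort i)]
    congr 1
    ext y
    simpa [S] using fun hi _ => ⟨i, hi⟩
  have htwo : ∀ y ∈ hfin.toFinset, (Finset.univ.filter fun i => G.Adj (x i) y).card = 2 :=
    fun y hy => by
      obtain ⟨hy, i, hi⟩ := hfin.mem_toFinset.mp hy
      exact card_filter_adj_eq_two_of_short_clique hloc hshort hadj hy hi
  have hdouble := Finset.card_mul_eq_card_mul (fun i y => G.Adj (x i) y) (fun i _ => hsix i) htwo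
  rw [Finset.card_univ, Fintype.card_fin] at hdouble
  rw [Set.ncard_eq_toFinset_card S hfin]
  omega

end LocallyLikeWF4

theorem twelve_long_neighbors_of_short_clique {V : Type} (G : SimpleGraph V) (c : V → Bool)
    (hloc : LocallyLikeWF4 G c) (x : Fin 4 → V)
    (hshort : ∀ i, c (x i) = true)
    (hadj : ∀ i j, i ≠ j → G.Adj (x i) (x j)) :
    {y : V | c y = false ∧ ∃ i, G.Adj (x i) y}.ncard = 12 ∧
    ∀ i j k l : Fin 4, i ≠ j → k ≠ l →
      ({i, j} : Finset (Fin 4)) ≠ {k, l} → (({i, j} : Finset (Fin 4)) ∩ {k, l}).Nonempty →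
      ∀ y y' : V, c y = false → G.Adj (x i) y → G.Adj (x j) y →
        c y' = false → G.Adj (x k) y' → G.Adj (x l) y' → ¬ G.Adj y y' := by
  refine ⟨ncard_long_adj_short_clique hloc hshort hadj, ?_⟩
  intro i j k l hij hkl hne hmeet y y' hy hiy hjy hy' hky hly
  refine not_adj_long_of_short_clique hloc hshort hadj hne
    (by rw [Finset.card_pair hij, Finset.card_pair hkl]) hmeet hy hy' ?_ ?_
  · simp [hiy, hjy]
  · simp [hky, hly]
end
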